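/- If finite simple graphs G and H (on disjoint vertex sets) each have an outside-obstacle representation, then their disjoint union G ⊔ H has an outside-obstacle representation. -/

import Mathlib

noncomputable section

/-- The plane ℝ². -/
abbrev Plane : Type := EuclideanSpace ℝ (Fin 2)

/-- A point set is in general position if no three of its points are collinear. -/
def InGenPos (P : Set Plane) : Prop :=
  ∀ p ∈ P, ∀ q ∈ P, ∀ r ∈ P, p ≠ q → p ≠ r → q ≠ r →
    ¬ Collinear ℝ ({p, q, r} : Set Plane)

/-- The union of the closed segments corresponding to the edges of `G`
in the straight-line drawing given by `f`. -/
def edgeUnion {V : Type} (G : SimpleGraph V) (f : V → Plane) : Set Plane :=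
  ⋃ (u : V) (v : V) (_ : G.Adj u v), segment ℝ (f u) (f v)

/-- The unbounded connected component of the complement of the drawing. -/
def outsideRegion {V : Type} (G : SimpleGraph V) (f : V → Plane) : Set Plane :=
  {p | p ∈ (edgeUnion G f)ᶜ ∧
       ¬ Bornology.IsBounded (connectedComponentIn (edgeUnion G f)ᶜ p)}

/-- `(f, C)` is a single-obstacle representation of `G`. -/
def IsObstacleRep {V : Type} (G : SimpleGraph V) (f : V → Plane) (C : Set Plane) : Prop :=
  Function.Injective f ∧ InGenPos (Set.range f) ∧
  IsOpen C ∧ IsConnected C ∧ Disjoint C (Set.range f) ∧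
  ∀ u v : V, u ≠ v → (G.Adj u v ↔ Disjoint (segment ℝ (f u) (f v)) C)

/-- An outside-obstacle representation: the obstacle lies in the unbounded component. -/
def IsOutsideObstacleRep {V : Type} (G : SimpleGraph V) (f : V → Plane) (C : Set Plane) : Prop :=
  IsObstacleRep G f C ∧ C ⊆ outsideRegion G f

/-- An inside-obstacle representation: the obstacle avoids the unbounded component. -/
def IsInsideObstacleRep {V : Type} (G : SimpleGraph V) (f : V → Plane) (C : Set Plane) : Prop :=
  IsObstacleRep G f C ∧ Disjoint C (outsideRegion G f)

/-- An exposed outside-obstacle representation: every vertex lies on the boundary of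
the unbounded component. -/
def IsExposedOutsideObstacleRep {V : Type} (G : SimpleGraph V) (f : V → Plane)
    (C : Set Plane) : Prop :=
  IsOutsideObstacleRep G f C ∧ ∀ v : V, f v ∈ closure (outsideRegion G f)

/-- `p` is an extreme point ("on the convex hull") of the point set `P`. -/
def IsExtremePt (p : Plane) (P : Set Plane) : Prop :=
  p ∉ convexHull ℝ (P \ {p})

/-- `S` has at least `n` connected components. -/
def AtLeastNComponents (S : Set Plane) (n : ℕ) : Prop :=
  ∃ p : Fin n → Plane, (∀ i, p i ∈ S) ∧
    ∀ i j : Fin n, i ≠ j →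
      connectedComponentIn S (p i) ≠ connectedComponentIn S (p j)

/-- `S` has exactly `n` connected components. -/
def ExactlyNComponents (S : Set Plane) (n : ℕ) : Prop :=
  ∃ p : Fin n → Plane, (∀ i, p i ∈ S) ∧
    (∀ i j : Fin n, i ≠ j →
      connectedComponentIn S (p i) ≠ connectedComponentIn S (p j)) ∧
    ∀ q ∈ S, ∃ i : Fin n, connectedComponentIn S q = connectedComponentIn S (p i)

/-- The convex hulls of `A` and `B` are at least `t`-crossing. -/
def AtLeastCrossing (A B : Set Plane) (t : ℕ) : Prop :=
  ((convexHull ℝ A) ∩ (convexHull ℝ B)).Nonempty ∧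
    AtLeastNComponents ((convexHull ℝ A) \ (convexHull ℝ B)) (t + 1)

/-- The convex hulls of `A` and `B` are exactly `t`-crossing. -/
def ExactlyCrossing (A B : Set Plane) (t : ℕ) : Prop :=
  ((convexHull ℝ A) ∩ (convexHull ℝ B)).Nonempty ∧
    ExactlyNComponents ((convexHull ℝ A) \ (convexHull ℝ B)) (t + 1)


/-- The disjoint union of two simple graphs. -/
def sumGraph {V W : Type} (G : SimpleGraph V) (H : SimpleGraph W) : SimpleGraph (V ⊕ W) where
  Adj x y :=
    match x, y with
    | Sum.inl a, Sum.inl b => G.Adj a b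
    | Sum.inr a, Sum.inr b => H.Adj a b
    | _, _ => False
  symm := by
    constructor
    rintro (a | a) (b | b) h
    · exact h.symm
    · exact h.elim
    · exact h.elim
    · exact h.symm
  loopless := by
    constructor
    rintro (a | a) h
    · exact G.irrefl h
    · exact H.irrefl h


/-!
Each obstacle is first shrunk to a bounded one. Inside the unbounded face, minus the vertices,
join a point of the obstacle on every non-edge and a point far out in a prescribed direction
(to the right for `G`, to the left for `H`); a small thickening of the union of these paths is a
bounded obstacle. Then the drawing of `H` is translated far to the right, generically so that the
union stays in general position, and the two bounded obstacles are joined through the vertical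
strip between the two drawings. The strip meets every segment from one drawing to the other and,
being unbounded, keeps the joined obstacle in the unbounded face.
-/

open Set Metric Bornology MeasureTheory Topology Pointwise

section Topology

variable {E : Type*} [NormedAddCommGroup E] [NormedSpace ℝ E]

theorem isPathConnected_ball_diff_countable (hE : 1 < Module.rank ℝ E) (c : E) {r : ℝ}
    (hr : 0 < r) {F : Set E} (hF : F.Countable) : IsPathConnected (ball c r \ F) := by
  set e := OpenPartialHomeomorph.univBall c r
  have he : Function.Injective e :=
    injOn_univ.mp (OpenPartialHomeomorph.univBall_source c r ▸ e.injOn)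
  have himage : e '' (e ⁻¹' F)ᶜ = ball c r \ F := by
    rw [image_compl_preimage, ← image_univ, ← OpenPartialHomeomorph.univBall_source c r,
      e.image_source_eq_target, OpenPartialHomeomorph.univBall_target c hr]
  rw [← himage]
  exact ((hF.preimage he).isPathConnected_compl_of_one_lt_rank hE).image
    (OpenPartialHomeomorph.continuous_univBall c r)

theorem IsOpen.isPathConnected_diff_countable (hE : 1 < Module.rank ℝ E) {U F : Set E}
    (hU : IsOpen U) (hUc : IsConnected U) (hF : F.Countable) : IsPathConnected (U \ F) := by
  -- `P` holds locally since balls minus `F` are path connected; connectedness of `U` spreads it.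
  let P : E → E → Prop := fun x y => ∃ ε > 0,
    ∀ a ∈ ball x ε \ F, ∀ b ∈ ball y ε \ F, JoinedIn (U \ F) a b
  have hlocal : ∀ x ∈ U, ∀ᶠ y in 𝓝[U] x, P x y ∧ P y x := by
    intro x hx
    obtain ⟨r, hr, hrU⟩ := Metric.isOpen_iff.mp hU x hx
    have hjoin : ∀ a ∈ ball x r \ F, ∀ b ∈ ball x r \ F, JoinedIn (U \ F) a b :=
      fun a ha b hb => ((isPathConnected_ball_diff_countable hE x hr hF).joinedIn a ha b hb).mono
        (sdiff_subset_sdiff_left hrU)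
    have hsub : ∀ y ∈ ball x (r / 2), ball y (r / 2) \ F ⊆ ball x r \ F := fun y hy =>
      sdiff_subset_sdiff_left (ball_subset_ball' (by rw [mem_ball] at hy; linarith))
    have hsub' : ball x (r / 2) \ F ⊆ ball x r \ F :=
      sdiff_subset_sdiff_left (ball_subset_ball (by linarith))
    filter_upwards [nhdsWithin_le_nhds (ball_mem_nhds x (half_pos hr))] with y hy
    exact ⟨⟨r / 2, half_pos hr, fun a ha b hb => hjoin a (hsub' ha) b (hsub y hy hb)⟩,
      ⟨r / 2, half_pos hr, fun a ha b hb => hjoin a (hsub y hy ha) b (hsub' hb)⟩⟩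
  have htrans : ∀ x y z, x ∈ U → y ∈ U → z ∈ U → P x y → P y z → P x z := by
    rintro x y z - - - ⟨ε, hε, hxy⟩ ⟨δ, hδ, hyz⟩
    obtain ⟨b, hb⟩ := (isPathConnected_ball_diff_countable hE y (lt_min hε hδ) hF).nonempty
    have hbε : b ∈ ball y ε \ F := ⟨ball_subset_ball (min_le_left ε δ) hb.1, hb.2⟩
    have hbδ : b ∈ ball y δ \ F := ⟨ball_subset_ball (min_le_right ε δ) hb.1, hb.2⟩
    exact ⟨min ε δ, lt_min hε hδ, fun a ha c hc =>
      (hxy a ⟨ball_subset_ball (min_le_left ε δ) ha.1, ha.2⟩ b hbε).trans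
        (hyz b hbδ c ⟨ball_subset_ball (min_le_right ε δ) hc.1, hc.2⟩)⟩
  obtain ⟨x, hx⟩ := hUc.nonempty
  obtain ⟨r, hr, hrU⟩ := Metric.isOpen_iff.mp hU x hx
  refine isPathConnected_iff.mpr ⟨?_, fun a ha b hb => ?_⟩
  · exact (isPathConnected_ball_diff_countable hE x hr hF).nonempty.mono
      (sdiff_subset_sdiff_left hrU)
  · obtain ⟨ε, hε, hab⟩ := hUc.isPreconnected.induction₂' P hlocal htrans ha.1 hb.1
    exact hab a ⟨mem_ball_self hε, ha.2⟩ b ⟨mem_ball_self hε, hb.2⟩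

theorem IsPreconnected.thickening {K : Set E} (hK : IsPreconnected K) (δ : ℝ) :
    IsPreconnected (thickening δ K) := by
  rw [← add_ball_zero, ← image2_add, ← image_prod]
  exact (hK.prod isPreconnected_ball).image _ continuous_add.continuousOn

theorem IsOpen.exists_isConnected_isBounded_of_joinedIn {Ω T : Set E} {x₀ : E} (hΩ : IsOpen Ω)
    (hT : T.Finite) (hx₀ : x₀ ∈ T) (hjoin : ∀ p ∈ T, JoinedIn Ω x₀ p) :
    ∃ D, IsOpen D ∧ IsConnected D ∧ IsBounded D ∧ T ⊆ D ∧ D ⊆ Ω := by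
  have : Finite T := hT.to_subtype
  set K := ⋃ p : T, range (hjoin p p.2).somePath
  have hKc : IsCompact K := isCompact_iUnion fun p => isCompact_range (Path.continuous _)
  have hKp : IsPreconnected K :=
    isPreconnected_iUnion ⟨x₀, mem_iInter.mpr fun p => ⟨0, Path.source _⟩⟩ fun p =>
      isPreconnected_range (Path.continuous _)
  have hTK : T ⊆ K := fun p hp => mem_iUnion.mpr ⟨⟨p, hp⟩, 1, Path.target _⟩
  have hKΩ : K ⊆ Ω := iUnion_subset fun p => range_subset_iff.mpr (hjoin p p.2).somePath_mem
  obtain ⟨δ, hδ, hδΩ⟩ := hKc.exists_thickening_subset_open hΩ hKΩ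
  exact ⟨thickening δ K, isOpen_thickening,
    ⟨⟨x₀, self_subset_thickening hδ K (hTK hx₀)⟩, hKp.thickening δ⟩, hKc.isBounded.thickening,
    hTK.trans (self_subset_thickening hδ K), hδΩ⟩

end Topology

section Haar

variable {E : Type*} [NormedAddCommGroup E] [NormedSpace ℝ E] [MeasurableSpace E] [BorelSpace E]
  [FiniteDimensional ℝ E]

theorem MeasureTheory.Measure.addHaar_affineSpan_pair (μ : Measure E) [μ.IsAddHaarMeasure]
    (hE : 1 < Module.finrank ℝ E) (p q : E) : μ (line[ℝ, p, q] : Set E) = 0 := by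
  refine Measure.addHaar_affineSubspace μ _ fun htop => ?_
  have hle : Module.finrank ℝ (line[ℝ, p, q]).direction ≤ 1 := by
    rw [direction_affineSpan, vectorSpan_pair]
    exact (finrank_span_le_card _).trans (by simp)
  rw [htop, AffineSubspace.direction_top, finrank_top] at hle
  omega

end Haar

section AffineSpace

variable {k V P : Type*} [DivisionRing k] [AddCommGroup V] [Module k V] [AddTorsor V P]

theorem vadd_mem_affineSpan_pair_vadd_iff (t : V) (p q x : P) :
    t +ᵥ x ∈ line[k, t +ᵥ p, t +ᵥ q] ↔ x ∈ line[k, p, q] := by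
  rw [← vadd_set_singleton, ← vadd_set_insert, ← AffineSubspace.pointwise_vadd_span,
    AffineSubspace.vadd_mem_pointwise_vadd_iff]

theorem collinear_vadd_iff (t : V) (s : Set P) : Collinear k (t +ᵥ s) ↔ Collinear k s := by
  rw [Collinear, Collinear, vectorSpan_vadd]

end AffineSpace

theorem finrank_plane : Module.finrank ℝ Plane = 2 := finrank_euclideanSpace_fin

theorem one_lt_rank_plane : 1 < Module.rank ℝ Plane := by
  rw [← Module.finrank_eq_rank, finrank_plane]; norm_num

theorem volume_setOf_add_mem_line {P Q : Set Plane} (hP : P.Finite) (hQ : Q.Finite) :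
    volume {t : Plane | ∃ a ∈ P, ∃ a' ∈ P, ∃ b ∈ Q, t + b ∈ line[ℝ, a, a']} = 0 := by
  have hset : {t : Plane | ∃ a ∈ P, ∃ a' ∈ P, ∃ b ∈ Q, t + b ∈ line[ℝ, a, a']} =
      ⋃ a ∈ P, ⋃ a' ∈ P, ⋃ b ∈ Q, (· + b) ⁻¹' (line[ℝ, a, a'] : Set Plane) := by
    ext t; simp
  rw [hset, measure_biUnion_null_iff hP.countable]
  refine fun a _ => (measure_biUnion_null_iff hP.countable).mpr fun a' _ =>
    (measure_biUnion_null_iff hQ.countable).mpr fun b _ => ?_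
  rw [measure_preimage_add_right]
  exact Measure.addHaar_affineSpan_pair volume (by rw [finrank_plane]; norm_num) a a'

theorem InGenPos.vadd {Q : Set Plane} (hQ : InGenPos Q) (t : Plane) : InGenPos (t +ᵥ Q) := by
  rintro _ ⟨p, hp, rfl⟩ _ ⟨q, hq, rfl⟩ _ ⟨r, hr, rfl⟩ hpq hpr hqr hcol
  rw [← vadd_set_singleton, ← vadd_set_insert, ← vadd_set_insert, collinear_vadd_iff] at hcol
  exact hQ p hp q hq r hr (ne_of_apply_ne _ hpq) (ne_of_apply_ne _ hpr) (ne_of_apply_ne _ hqr) hcol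

theorem InGenPos.union {A B : Set Plane} (hA : InGenPos A) (hB : InGenPos B)
    (hAB : ∀ a ∈ A, ∀ a' ∈ A, ∀ b ∈ B, b ∉ line[ℝ, a, a'])
    (hBA : ∀ b ∈ B, ∀ b' ∈ B, ∀ a ∈ A, a ∉ line[ℝ, b, b']) : InGenPos (A ∪ B) := by
  intro p hp q hq r hr hpq hpr hqr hcol
  have hp' : p ∈ line[ℝ, q, r] := hcol.mem_affineSpan_of_mem_of_ne (by simp) (by simp) (by simp) hqr
  have hq' : q ∈ line[ℝ, p, r] := hcol.mem_affineSpan_of_mem_of_ne (by simp) (by simp) (by simp) hpr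
  have hr' : r ∈ line[ℝ, p, q] := hcol.mem_affineSpan_of_mem_of_ne (by simp) (by simp) (by simp) hpq
  rcases hp with hp | hp <;> rcases hq with hq | hq <;> rcases hr with hr | hr
  · exact hA p hp q hq r hr hpq hpr hqr hcol
  · exact hAB p hp q hq r hr hr'
  · exact hAB p hp r hr q hq hq'
  · exact hBA q hq r hr p hp hp'
  · exact hAB q hq r hr p hp hp'
  · exact hBA p hp r hr q hq hq'
  · exact hBA p hp q hq r hr hr'
  · exact hB p hp q hq r hr hpq hpr hqr hcol

theorem exists_inGenPos_union_vadd {P Q : Set Plane} (hP : P.Finite) (hQ : Q.Finite)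
    (hPg : InGenPos P) (hQg : InGenPos Q) {O : Set Plane} (hO : IsOpen O) (hOne : O.Nonempty) :
    ∃ t ∈ O, InGenPos (P ∪ (t +ᵥ Q)) := by
  set N := {t : Plane | ∃ a ∈ P, ∃ a' ∈ P, ∃ b ∈ Q, t + b ∈ line[ℝ, a, a']} ∪
    -{t : Plane | ∃ b ∈ Q, ∃ b' ∈ Q, ∃ a ∈ P, t + a ∈ line[ℝ, b, b']}
  have hN : volume N = 0 := measure_union_null (volume_setOf_add_mem_line hP hQ)
    (by rw [Measure.measure_neg]; exact volume_setOf_add_mem_line hQ hP)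
  obtain ⟨t, htO, htN⟩ : (O \ N).Nonempty := nonempty_of_measure_ne_zero <| by
    rw [measure_sdiff_null hN]; exact (hO.measure_pos volume hOne).ne'
  refine ⟨t, htO, hPg.union (hQg.vadd t) ?_ ?_⟩
  · rintro a ha a' ha' _ ⟨b, hb, rfl⟩ hline
    exact htN (Or.inl ⟨a, ha, a', ha', b, hb, hline⟩)
  · rintro _ ⟨b, hb, rfl⟩ _ ⟨b', hb', rfl⟩ a ha hline
    rw [← vadd_neg_vadd t a, vadd_mem_affineSpan_pair_vadd_iff] at hline
    exact htN (Or.inr ⟨b, hb, b', hb', a, ha, hline⟩)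

section Drawing

variable {V W : Type} {G : SimpleGraph V} {H : SimpleGraph W} {f : V → Plane} {C : Set Plane}

theorem segment_subset_edgeUnion {u v : V} (h : G.Adj u v) :
    segment ℝ (f u) (f v) ⊆ edgeUnion G f :=
  fun _ hp => mem_iUnion₂.mpr ⟨u, v, mem_iUnion.mpr ⟨h, hp⟩⟩

theorem edgeUnion_subset_of_convex {K : Set Plane} (hK : Convex ℝ K) (hf : ∀ v, f v ∈ K) :
    edgeUnion G f ⊆ K :=
  iUnion₂_subset fun u v => iUnion_subset fun _ => hK.segment_subset (hf u) (hf v)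

theorem isClosed_edgeUnion [Finite V] (G : SimpleGraph V) (f : V → Plane) :
    IsClosed (edgeUnion G f) :=
  isClosed_iUnion_of_finite fun u => isClosed_iUnion_of_finite fun v =>
    isClosed_iUnion_of_finite fun _ => by
      rw [segment_eq_image]
      exact (isCompact_Icc.image (by fun_prop)).isClosed

theorem edgeUnion_sumGraph (f : V → Plane) (g : W → Plane) :
    edgeUnion (sumGraph G H) (Sum.elim f g) = edgeUnion G f ∪ edgeUnion H g := by
  ext x
  simp [edgeUnion, sumGraph, Sum.exists]

theorem IsObstacleRep.disjoint_edgeUnion (h : IsObstacleRep G f C) :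
    Disjoint C (edgeUnion G f) := by
  simp only [edgeUnion, disjoint_iUnion_right]
  exact fun u v huv => ((h.2.2.2.2.2 u v huv.ne).mp huv).symm

theorem isObstacleRep_of_subset_compl (hf : Function.Injective f) (hgen : InGenPos (range f))
    {D : Set Plane} (hDo : IsOpen D) (hDc : IsConnected D)
    (hD : D ⊆ (edgeUnion G f ∪ range f)ᶜ)
    (hmeet : ∀ u v, u ≠ v → ¬ G.Adj u v → (segment ℝ (f u) (f v) ∩ D).Nonempty) :
    IsObstacleRep G f D := by
  refine ⟨hf, hgen, hDo, hDc, ?_, fun u v huv => ⟨fun hadj => ?_, fun hdisj => ?_⟩⟩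
  · exact (subset_compl_iff_disjoint_right.mp hD).mono_right subset_union_right
  · exact (subset_compl_iff_disjoint_right.mp hD).symm.mono_left
      ((segment_subset_edgeUnion hadj).trans subset_union_left)
  · by_contra hna
    exact (hmeet u v huv hna).not_disjoint hdisj

theorem subset_outsideRegion (hC : IsPreconnected C) (hdisj : Disjoint C (edgeUnion G f))
    (hunb : ¬ IsBounded C) : C ⊆ outsideRegion G f := fun _ hp =>
  ⟨disjoint_left.mp hdisj hp, fun hb => hunb <| hb.subset <|
    hC.subset_connectedComponentIn hp (subset_compl_iff_disjoint_right.mpr hdisj)⟩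

theorem IsObstacleRep.vadd (h : IsObstacleRep G f C) (t : Plane) :
    IsObstacleRep G (fun v => t +ᵥ f v) (t +ᵥ C) := by
  obtain ⟨hf, hgen, hCo, hCc, hCf, hadj⟩ := h
  have hrange : range (fun v => t +ᵥ f v) = t +ᵥ range f := by
    rw [← image_vadd, ← range_comp]; rfl
  refine ⟨(AddAction.injective t).comp hf, hrange ▸ hgen.vadd t, hCo.vadd t,
    hCc.image _ (continuous_const_vadd t).continuousOn, hrange ▸ disjoint_vadd_set.mpr hCf,
    fun u v huv => ?_⟩
  rw [← vadd_segment, disjoint_vadd_set]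
  exact hadj u v huv

end Drawing

section Shrinking

variable {V : Type} [Finite V] {G : SimpleGraph V} {f : V → Plane} {C : Set Plane}

theorem isOpen_compl_drawing (G : SimpleGraph V) (f : V → Plane) :
    IsOpen (edgeUnion G f ∪ range f)ᶜ :=
  ((isClosed_edgeUnion G f).union (finite_range f).isClosed).isOpen_compl

theorem IsOutsideObstacleRep.exists_joinedIn_smul (h : IsOutsideObstacleRep G f C) {x₀ : Plane}
    (hx₀ : x₀ ∈ C) (R : ℝ) {d : Plane} (hd : ‖d‖ = 1) :
    ∃ s, R < s ∧ JoinedIn (edgeUnion G f ∪ range f)ᶜ x₀ (s • d) := by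
  obtain ⟨r, hr⟩ := (finite_range f).isBounded.subset_closedBall 0
  have hdraw : edgeUnion G f ∪ range f ⊆ closedBall 0 r :=
    union_subset (edgeUnion_subset_of_convex (convex_closedBall 0 r) (forall_mem_range.mp hr)) hr
  set U := connectedComponentIn (edgeUnion G f)ᶜ x₀
  obtain ⟨z, hzU, hz⟩ : ∃ z ∈ U, max R r < ‖z‖ := by
    by_contra! hU
    exact (h.2 hx₀).2 <| isBounded_closedBall.subset fun z hz =>
      mem_closedBall_zero_iff.mpr (hU z hz)
  have hsphere : sphere (0 : Plane) ‖z‖ ⊆ (edgeUnion G f ∪ range f)ᶜ := fun p hp hpd => by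
    have := mem_closedBall_zero_iff.mp (hdraw hpd)
    rw [mem_sphere_zero_iff_norm] at hp
    linarith [le_max_right R r]
  have hzd : ‖z‖ • d ∈ sphere (0 : Plane) ‖z‖ := by simp [norm_smul, hd]
  -- The circle through the far point `z` of the face goes around the whole drawing.
  have hzdU : ‖z‖ • d ∈ U := by
    rw [show U = connectedComponentIn (edgeUnion G f)ᶜ z from connectedComponentIn_eq hzU]
    exact (isPreconnected_sphere one_lt_rank_plane 0 ‖z‖).subset_connectedComponentIn (by simp)
      (hsphere.trans (compl_subset_compl.mpr subset_union_left)) hzd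
  have hUo : IsOpen U := (isClosed_edgeUnion G f).isOpen_compl.connectedComponentIn
  have hUc : IsConnected U := isConnected_connectedComponentIn_iff.mpr (h.2 hx₀).1
  have hx₀U : x₀ ∈ U \ range f :=
    ⟨mem_connectedComponentIn (h.2 hx₀).1, disjoint_left.mp h.1.2.2.2.2.1 hx₀⟩
  have hUΩ : U \ range f ⊆ (edgeUnion G f ∪ range f)ᶜ := by
    rw [compl_union, sdiff_eq]
    exact inter_subset_inter_left _ (connectedComponentIn_subset _ _)
  refine ⟨‖z‖, (le_max_left R r).trans_lt hz, ?_⟩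
  have hpath := hUo.isPathConnected_diff_countable one_lt_rank_plane hUc (finite_range f).countable
  exact (hpath.joinedIn _ hx₀U _ ⟨hzdU, fun hmem => hsphere hzd (Or.inr hmem)⟩).mono hUΩ

theorem IsOutsideObstacleRep.exists_isBounded (h : IsOutsideObstacleRep G f C) (R : ℝ)
    {d : Plane} (hd : ‖d‖ = 1) :
    ∃ D, IsObstacleRep G f D ∧ IsBounded D ∧ ∃ s, R < s ∧ s • d ∈ D := by
  obtain ⟨hf, hgen, hCo, hCc, hCf, hadj⟩ := h.1
  have hCΩ : C ⊆ (edgeUnion G f ∪ range f)ᶜ := by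
    rw [compl_union]
    exact subset_inter h.1.disjoint_edgeUnion.subset_compl_right hCf.subset_compl_right
  obtain ⟨x₀, hx₀⟩ := hCc.nonempty
  obtain ⟨s, hs, hjoin⟩ := h.exists_joinedIn_smul hx₀ R hd
  have hnonedge (uv : {uv : V × V // uv.1 ≠ uv.2 ∧ ¬ G.Adj uv.1 uv.2}) :
      (segment ℝ (f uv.1.1) (f uv.1.2) ∩ C).Nonempty :=
    not_disjoint_iff_nonempty_inter.mp fun hdisj => uv.2.2 ((hadj _ _ uv.2.1).mpr hdisj)
  choose pt hpt using hnonedge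
  have hjoinT : ∀ p ∈ insert (s • d) (range pt),
      JoinedIn (edgeUnion G f ∪ range f)ᶜ (s • d) p := by
    rintro p (rfl | ⟨uv, rfl⟩)
    · exact JoinedIn.refl hjoin.target_mem
    · exact hjoin.symm.trans (((hCo.isConnected_iff_isPathConnected.mp hCc).joinedIn
        x₀ hx₀ _ (hpt uv).2).mono hCΩ)
  obtain ⟨D, hDo, hDc, hDb, hTD, hDΩ⟩ :=
    (isOpen_compl_drawing G f).exists_isConnected_isBounded_of_joinedIn
      ((finite_range pt).insert _) (mem_insert _ _) hjoinT
  refine ⟨D, isObstacleRep_of_subset_compl hf hgen hDo hDc hDΩ fun u v huv hna => ?_, hDb, s, hs,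
    hTD (mem_insert _ _)⟩
  exact ⟨pt ⟨(u, v), huv, hna⟩, (hpt ⟨(u, v), huv, hna⟩).1,
    hTD (mem_insert_of_mem _ (mem_range_self _))⟩

end Shrinking

section Strip

def strip (a b : ℝ) : Set Plane := {x | a < x 0 ∧ x 0 < b}

theorem isLinearMap_plane_apply (i : Fin 2) : IsLinearMap ℝ fun x : Plane => x i :=
  ⟨fun _ _ => rfl, fun _ _ => rfl⟩

theorem exists_forall_abs_apply_lt {s : Set Plane} (hs : IsBounded s) (i : Fin 2) :
    ∃ r, ∀ x ∈ s, |x i| < r := by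
  obtain ⟨r, hr⟩ := hs.subset_closedBall 0
  exact ⟨r + 1, fun x hx => by
    linarith [PiLp.norm_apply_le x i, mem_closedBall_zero_iff.mp (hr hx), Real.norm_eq_abs (x i)]⟩

variable {a b : ℝ}

theorem isOpen_strip : IsOpen (strip a b) := by
  have hc : Continuous fun x : Plane => x 0 := by fun_prop
  exact (isOpen_lt continuous_const hc).inter (isOpen_lt hc continuous_const)

theorem isConnected_strip (hab : a < b) : IsConnected (strip a b) := by
  refine ⟨⟨!₂[(a + b) / 2, 0], show a < (a + b) / 2 ∧ (a + b) / 2 < b by constructor <;> linarith⟩,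
    ?_⟩
  exact ((convex_halfSpace_gt (isLinearMap_plane_apply 0) a).inter
    (convex_halfSpace_lt (isLinearMap_plane_apply 0) b)).isPreconnected

theorem not_isBounded_strip (hab : a < b) : ¬ IsBounded (strip a b) := by
  intro hb
  obtain ⟨r, hr⟩ := hb.subset_closedBall 0
  let x : Plane := !₂[(a + b) / 2, |r| + 1]
  have hxS : x ∈ strip a b := show a < (a + b) / 2 ∧ (a + b) / 2 < b by constructor <;> linarith
  have hx1 : |r| + 1 ≤ ‖x‖ := (le_abs_self _).trans (PiLp.norm_apply_le x 1)
  linarith [le_abs_self r, mem_closedBall_zero_iff.mp (hr hxS)]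

theorem segment_inter_strip_nonempty {p q : Plane} (hab : a < b) (hp : p 0 < a) (hq : b < q 0) :
    (segment ℝ p q ∩ strip a b).Nonempty := by
  obtain ⟨x, hx, hx0⟩ := (convex_segment p q).isPreconnected.intermediate_value
    (left_mem_segment ℝ p q) (right_mem_segment ℝ p q) (f := fun x : Plane => x 0)
    (by fun_prop) (show (a + b) / 2 ∈ Icc (p 0) (q 0) by constructor <;> linarith)
  exact ⟨x, hx, show a < x 0 ∧ x 0 < b by constructor <;> linarith⟩

end Strip

section Gluing

variable {V W : Type} {G : SimpleGraph V} {H : SimpleGraph W} {K DG DH : Set Plane} {x y : Plane}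
  {a b : ℝ}

theorem disjoint_union_strip_union_iff_left (hDH : ∀ x ∈ DH, a < x 0)
    (hK : ∀ x ∈ K, x 0 < a) :
    Disjoint K (DG ∪ strip a b ∪ DH) ↔ Disjoint K DG := by
  refine ⟨fun h => h.mono_right (subset_union_left.trans subset_union_left),
    fun h => disjoint_union_right.mpr ⟨disjoint_union_right.mpr ⟨h, ?_⟩, ?_⟩⟩
  · exact disjoint_left.mpr fun z hz hzS => (hzS.1.trans (hK z hz)).false
  · exact disjoint_left.mpr fun z hz hzH => ((hDH z hzH).trans (hK z hz)).false

theorem disjoint_union_strip_union_iff_right (hDG : ∀ x ∈ DG, x 0 < b)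
    (hK : ∀ x ∈ K, b < x 0) :
    Disjoint K (DG ∪ strip a b ∪ DH) ↔ Disjoint K DH := by
  refine ⟨fun h => h.mono_right subset_union_right,
    fun h => disjoint_union_right.mpr ⟨disjoint_union_right.mpr ⟨?_, ?_⟩, h⟩⟩
  · exact disjoint_left.mpr fun z hz hzG => ((hDG z hzG).trans (hK z hz)).false
  · exact disjoint_left.mpr fun z hz hzS => (hzS.2.trans (hK z hz)).false

theorem IsConnected.union_strip_union (hDGc : IsConnected DG) (hDHc : IsConnected DH)
    (hDG : ∀ x ∈ DG, x 0 < b) (hDH : ∀ x ∈ DH, a < x 0) (hx : x ∈ DG) (hxa : a < x 0) (hy : y ∈ DH)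
    (hyb : y 0 < b) : IsConnected (DG ∪ strip a b ∪ DH) :=
  (hDGc.union (show (DG ∩ strip a b).Nonempty from ⟨x, hx, hxa, hDG x hx⟩)
    (isConnected_strip (hxa.trans (hDG x hx)))).union
    (show ((DG ∪ strip a b) ∩ DH).Nonempty from ⟨y, Or.inr ⟨hDH y hy, hyb⟩, hy⟩) hDHc

theorem isOutsideObstacleRep_sumGraph_of_strip {f : V → Plane} {g : W → Plane}
    (hG : IsObstacleRep G f DG) (hH : IsObstacleRep H g DH)
    (hgen : InGenPos (range f ∪ range g)) (hf : ∀ v, f v 0 < a) (hg : ∀ w, b < g w 0)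
    (hDG : ∀ x ∈ DG, x 0 < b) (hDH : ∀ x ∈ DH, a < x 0)
    (hDGa : ∃ x ∈ DG, a < x 0) (hDHb : ∃ x ∈ DH, x 0 < b) :
    IsOutsideObstacleRep (sumGraph G H) (Sum.elim f g) (DG ∪ strip a b ∪ DH) := by
  obtain ⟨x, hxG, hxa⟩ := hDGa
  obtain ⟨y, hyH, hyb⟩ := hDHb
  have hab : a < b := hxa.trans (hDG x hxG)
  have hconvL : Convex ℝ {x : Plane | x 0 < a} := convex_halfSpace_lt (isLinearMap_plane_apply 0) a
  have hconvR : Convex ℝ {x : Plane | b < x 0} := convex_halfSpace_gt (isLinearMap_plane_apply 0) b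
  have hconn := hG.2.2.2.1.union_strip_union hH.2.2.2.1 hDG hDH hxG hxa hyH hyb
  have hedges : Disjoint (DG ∪ strip a b ∪ DH) (edgeUnion (sumGraph G H) (Sum.elim f g)) := by
    rw [edgeUnion_sumGraph, disjoint_union_right]
    exact ⟨((disjoint_union_strip_union_iff_left hDH (edgeUnion_subset_of_convex hconvL hf)).mpr
        hG.disjoint_edgeUnion.symm).symm,
      ((disjoint_union_strip_union_iff_right hDG (edgeUnion_subset_of_convex hconvR hg)).mpr
        hH.disjoint_edgeUnion.symm).symm⟩
  refine ⟨⟨hG.1.sumElim hH.1 fun v w hvw =>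
      ((hf v).trans (hab.trans (hg w))).ne (congrArg (· 0) hvw),
    (Sum.elim_range f g).symm ▸ hgen, (hG.2.2.1.union isOpen_strip).union hH.2.2.1, hconn, ?_, ?_⟩,
    subset_outsideRegion hconn.isPreconnected hedges fun hb =>
      not_isBounded_strip hab (hb.subset (subset_union_right.trans subset_union_left))⟩
  · rw [Sum.elim_range, disjoint_union_right]
    exact ⟨((disjoint_union_strip_union_iff_left hDH (forall_mem_range.mpr hf)).mpr
        hG.2.2.2.2.1.symm).symm,
      ((disjoint_union_strip_union_iff_right hDG (forall_mem_range.mpr hg)).mpr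
        hH.2.2.2.2.1.symm).symm⟩
  · rintro (u | u) (v | v) huv
    · change G.Adj u v ↔ Disjoint (segment ℝ (f u) (f v)) _
      rw [disjoint_union_strip_union_iff_left hDH (hconvL.segment_subset (hf u) (hf v))]
      exact hG.2.2.2.2.2 u v (ne_of_apply_ne _ huv)
    · refine iff_of_false id fun hd => ?_
      obtain ⟨z, hz, hzS⟩ := segment_inter_strip_nonempty hab (hf u) (hg v)
      exact disjoint_left.mp hd hz (Or.inl (Or.inr hzS))
    · refine iff_of_false id fun hd => ?_
      obtain ⟨z, hz, hzS⟩ := segment_inter_strip_nonempty hab (hf v) (hg u)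
      rw [segment_symm] at hz
      exact disjoint_left.mp hd hz (Or.inl (Or.inr hzS))
    · change H.Adj u v ↔ Disjoint (segment ℝ (g u) (g v)) _
      rw [disjoint_union_strip_union_iff_right hDG (hconvR.segment_subset (hg u) (hg v))]
      exact hH.2.2.2.2.2 u v (ne_of_apply_ne _ huv)

end Gluing

/-- If finite simple graphs `G` and `H` each have an outside-obstacle
representation, then their disjoint union has an outside-obstacle representation. -/
theorem sumGraph_hasOutsideObstacleRep
    {V W : Type} [Fintype V] [Fintype W] (G : SimpleGraph V) (H : SimpleGraph W)
    (hG : ∃ (f : V → Plane) (C : Set Plane), IsOutsideObstacleRep G f C)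
    (hH : ∃ (f : W → Plane) (C : Set Plane), IsOutsideObstacleRep H f C) :
    ∃ (f : V ⊕ W → Plane) (C : Set Plane), IsOutsideObstacleRep (sumGraph G H) f C := by
  obtain ⟨f, CG, hG⟩ := hG
  obtain ⟨g, CH, hH⟩ := hH
  obtain ⟨a, ha⟩ := exists_forall_abs_apply_lt (finite_range f).isBounded 0
  obtain ⟨c, hc⟩ := exists_forall_abs_apply_lt (finite_range g).isBounded 0
  obtain ⟨DG, hDG, hDGb, s, hs, hsDG⟩ :=
    hG.exists_isBounded a (d := !₂[1, 0]) (by simp [EuclideanSpace.norm_eq])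
  obtain ⟨DH, hDH, hDHb, s', hs', hsDH⟩ :=
    hH.exists_isBounded c (d := !₂[-1, 0]) (by simp [EuclideanSpace.norm_eq])
  obtain ⟨ρ, hρ⟩ := exists_forall_abs_apply_lt hDGb 0
  obtain ⟨ρ', hρ'⟩ := exists_forall_abs_apply_lt hDHb 0
  obtain ⟨M, hM₁, hM₂⟩ : ∃ M, ρ + c ≤ M ∧ a + ρ' ≤ M := ⟨_, le_max_left _ _, le_max_right _ _⟩
  obtain ⟨t, ht, hgen⟩ := exists_inGenPos_union_vadd (finite_range f) (finite_range g)
    hG.1.2.1 hH.1.2.1 (O := {x | M < x 0}) (isOpen_lt continuous_const (by fun_prop))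
    ⟨!₂[M + 1, 0], by simp⟩
  replace ht : M < t 0 := ht
  refine ⟨_, _, isOutsideObstacleRep_sumGraph_of_strip (a := a) (b := t 0 - c) hDG (hDH.vadd t)
    (by rwa [← vadd_set_range]) (fun v => ?_) (fun w => ?_) (fun x hx => ?_) ?_
    ⟨s • (!₂[1, 0] : Plane), hsDG, by simpa using hs⟩
    ⟨t +ᵥ s' • (!₂[-1, 0] : Plane), vadd_mem_vadd_set hsDH, ?_⟩⟩
  · linarith [le_abs_self (f v 0), ha _ (mem_range_self v)]
  · simp only [vadd_eq_add, PiLp.add_apply]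
    linarith [neg_abs_le (g w 0), hc _ (mem_range_self w)]
  · linarith [le_abs_self (x 0), hρ x hx]
  · rintro _ ⟨y, hy, rfl⟩
    simp only [vadd_eq_add, PiLp.add_apply]
    linarith [neg_abs_le (y 0), hρ' y hy]
  · simp only [vadd_eq_add, PiLp.add_apply, PiLp.smul_apply, Matrix.cons_val_zero, smul_eq_mul,
      mul_neg, mul_one]
    linarith
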